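/- Let c : B(0,R)∖{0} → (0,∞) be smooth on the punctured Euclidean ball in ℝⁿ, n ≥ 2, and suppose ∂c/∂r < 0 at a point x₀ = r₀ω (i.e., c is decreasing in the radial direction there). Then the Euclidean sphere S_{r₀} = {|x| = r₀} is strictly convex at x₀ with respect to the metric c^{-2}dx², viewed from the exterior. -/

import Mathlib

open scoped RealInnerProductSpace

/-- Christoffel symbols of the conformally Euclidean metric `c⁻² dx²` on
`EuclideanSpace ℝ (Fin n)`:
`Γᵢⱼᵏ = (1/2) c² (δⱼᵏ ∂ᵢ(c⁻²) + δᵢᵏ ∂ⱼ(c⁻²) − δᵢⱼ ∂ₖ(c⁻²))`. -/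
noncomputable def gammaConf {n : ℕ} (c : EuclideanSpace ℝ (Fin n) → ℝ)
    (x : EuclideanSpace ℝ (Fin n)) (i j k : Fin n) : ℝ :=
  (1 / 2) * (c x) ^ 2 *
    ((if j = k then (1 : ℝ) else 0) * fderiv ℝ (fun y => ((c y) ^ 2)⁻¹) x (EuclideanSpace.single i 1)
      + (if i = k then (1 : ℝ) else 0) * fderiv ℝ (fun y => ((c y) ^ 2)⁻¹) x (EuclideanSpace.single j 1)
      - (if i = j then (1 : ℝ) else 0) * fderiv ℝ (fun y => ((c y) ^ 2)⁻¹) x (EuclideanSpace.single k 1))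

/-- The second fundamental form (up to the positive normalization `1/|∇f|_{g̃}`) of the level
set of `f` through `x`, with respect to the metric `c⁻² dx²` and with normal pointing in the
direction of `∇f`, evaluated on a tangent vector `ξ`:
`II(ξ,ξ) = Σᵢⱼ (∂ᵢ∂ⱼ f − Σₖ Γᵢⱼᵏ ∂ₖ f) ξ i ξ j`, i.e. the covariant Hessian of `f`. -/
noncomputable def sffConf {n : ℕ} (c f : EuclideanSpace ℝ (Fin n) → ℝ)
    (x ξ : EuclideanSpace ℝ (Fin n)) : ℝ :=
  ∑ i, ∑ j,
    (fderiv ℝ (fun y => fderiv ℝ f y (EuclideanSpace.single j 1)) x (EuclideanSpace.single i 1)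
      - ∑ k, gammaConf c x i j k * fderiv ℝ f x (EuclideanSpace.single k 1)) * ξ i * ξ j

lemma normSq_fderiv_single {n : ℕ} (x : EuclideanSpace ℝ (Fin n)) (j : Fin n) :
    fderiv ℝ (fun z : EuclideanSpace ℝ (Fin n) => ‖z‖ ^ 2) x (EuclideanSpace.single j 1)
      = 2 * x j := by
  have h : HasFDerivAt (fun z : EuclideanSpace ℝ (Fin n) => ‖z‖ ^ 2)
      (2 • ((innerSL ℝ x).comp (ContinuousLinearMap.id ℝ _))) x := by
    simpa using (hasFDerivAt_id x).norm_sq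
  rw [h.fderiv]
  simp [real_inner_comm, EuclideanSpace.inner_single_left]
  simp [EuclideanSpace.inner_single_right]

lemma normSq_fderiv2_single {n : ℕ} (x : EuclideanSpace ℝ (Fin n)) (i j : Fin n) :
    fderiv ℝ (fun y : EuclideanSpace ℝ (Fin n) =>
      fderiv ℝ (fun z : EuclideanSpace ℝ (Fin n) => ‖z‖ ^ 2) y (EuclideanSpace.single j 1)) x
      (EuclideanSpace.single i 1) = if i = j then 2 else 0 := by
  have h2 : HasFDerivAt (fun y : EuclideanSpace ℝ (Fin n) =>
      fderiv ℝ (fun z : EuclideanSpace ℝ (Fin n) => ‖z‖ ^ 2) y (EuclideanSpace.single j 1))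
      ((2:ℝ) • (EuclideanSpace.proj j : EuclideanSpace ℝ (Fin n) →L[ℝ] ℝ)) x := by
    have := ((EuclideanSpace.proj (𝕜 := ℝ) j).hasFDerivAt (x := x)).const_smul (2:ℝ)
    refine HasFDerivAt.congr_of_eventuallyEq this ?_
    filter_upwards with y
    simp [normSq_fderiv_single y j]
    simp [EuclideanSpace.inner_single_right]
  rw [h2.fderiv]
  simp [EuclideanSpace.single_apply]
  by_cases h : i = j <;> simp [h, eq_comm]

lemma clm_sum_single {n : ℕ} (ξ : EuclideanSpace ℝ (Fin n))
    (D : EuclideanSpace ℝ (Fin n) →L[ℝ] ℝ) :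
    D ξ = ∑ i, ξ i * D (EuclideanSpace.single i 1) := by
  have h := (EuclideanSpace.basisFun (Fin n) ℝ).sum_repr ξ
  simp only [EuclideanSpace.basisFun_repr, EuclideanSpace.basisFun_apply] at h
  conv_lhs => rw [← h]
  simp [map_sum]


/-- If `c > 0` is smooth on the punctured ball `B(0,R)∖{0} ⊂ ℝⁿ`, `n ≥ 2`,
and `∂c/∂r < 0` at `x₀` with `|x₀| = r₀`, then the Euclidean sphere `{|x| = r₀}` is strictly
convex at `x₀` w.r.t. the metric `c⁻²dx²`, viewed from the exterior (normal `∇(|x|²)`,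
pointing outward). -/
theorem sphere_strictly_convex_of_radial_decrease
    {n : ℕ} (hn : 2 ≤ n) (R r₀ : ℝ) (hr₀ : 0 < r₀) (hRr : r₀ < R)
    (c : EuclideanSpace ℝ (Fin n) → ℝ)
    (hc : ∀ x : EuclideanSpace ℝ (Fin n), x ≠ 0 → ‖x‖ < R → ContDiffAt ℝ (⊤ : ℕ∞) c x)
    (hcpos : ∀ x : EuclideanSpace ℝ (Fin n), x ≠ 0 → ‖x‖ < R → 0 < c x)
    (x₀ : EuclideanSpace ℝ (Fin n)) (hx₀ : ‖x₀‖ = r₀)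
    (hrad : fderiv ℝ c x₀ (‖x₀‖⁻¹ • x₀) < 0) :
    ∀ ξ : EuclideanSpace ℝ (Fin n), ξ ≠ 0 → ⟪x₀, ξ⟫ = 0 →
      0 < sffConf c (fun y => ‖y‖ ^ 2) x₀ ξ := by
  intro ξ hξ hperp
  have hx0norm : 0 < ‖x₀‖ := hx₀ ▸ hr₀
  have hx0ne : x₀ ≠ 0 := by simpa using norm_pos_iff.mp hx0norm
  have hxR : ‖x₀‖ < R := hx₀ ▸ hRr
  set a := c x₀ with ha_def
  have ha : 0 < a := hcpos x₀ hx0ne hxR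
  have hcd : DifferentiableAt ℝ c x₀ := (hc x₀ hx0ne hxR).differentiableAt (by simp)
  set L := fderiv ℝ c x₀ with hL_def
  -- radial derivative is negative
  have hLx : L x₀ < 0 := by
    have h1 : ‖x₀‖⁻¹ * L x₀ < 0 := by
      rw [← smul_eq_mul, ← map_smul]; exact hrad
    by_contra hcon
    push_neg at hcon
    have : 0 ≤ ‖x₀‖⁻¹ * L x₀ := mul_nonneg (by positivity) hcon
    linarith
  -- derivative of (c ^ 2)⁻¹
  have hφ : HasDerivAt (fun t : ℝ => (t ^ 2)⁻¹) (-(↑2 * a ^ 1) / (a ^ 2) ^ 2) a :=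
    (hasDerivAt_pow 2 a).inv (by positivity)
  have hH : HasFDerivAt (fun y => ((c y) ^ 2)⁻¹) ((-(↑2 * a ^ 1) / (a ^ 2) ^ 2) • L) x₀ :=
    hφ.comp_hasFDerivAt x₀ hcd.hasFDerivAt
  set D := fderiv ℝ (fun y => ((c y) ^ 2)⁻¹) x₀ with hD_def
  have hDL : ∀ v, D v = (-(2 * a) / (a ^ 2) ^ 2) * L v := by
    intro v
    rw [hD_def, hH.fderiv]
    simp only [ContinuousLinearMap.coe_smul', Pi.smul_apply, smul_eq_mul, pow_one]
  -- abbreviations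
  set Di : Fin n → ℝ := fun i => D (EuclideanSpace.single i 1) with hDi_def
  set S : ℝ := ∑ k, Di k * x₀ k with hS_def
  have hperp' : ∑ i, x₀ i * ξ i = 0 := by
    rw [← hperp]
    simp [PiLp.inner_apply, RCLike.inner_apply]
    exact Finset.sum_congr rfl fun i _ => mul_comm _ _
  -- S equals D x₀ and is positive
  have hS : S = D x₀ := by
    rw [clm_sum_single x₀ D]
    exact Finset.sum_congr rfl fun k _ => by rw [mul_comm]
  have hSpos : 0 < S := by
    rw [hS, hDL x₀]
    have hnum : -(2 * a) / (a ^ 2) ^ 2 < 0 := by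
      apply div_neg_of_neg_of_pos
      · nlinarith
      · positivity
    exact mul_pos_of_neg_of_neg hnum hLx
  have hP : 0 < ∑ i, ξ i * ξ i := by
    have h1 : (⟪ξ, ξ⟫ : ℝ) = ‖ξ‖ ^ 2 := real_inner_self_eq_norm_sq ξ
    rw [PiLp.inner_apply] at h1
    simp only [RCLike.inner_apply, starRingEnd_apply, star_trivial] at h1
    rw [h1]
    have h2 : 0 < ‖ξ‖ := norm_pos_iff.mpr hξ
    positivity
  set Q : ℝ := ∑ j, Di j * ξ j with hQ_def
  -- now compute sffConf
  have hk : ∀ i j : Fin n,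
      (∑ k, ((1 / 2) * a ^ 2 *
        ((if j = k then (1:ℝ) else 0) * D (EuclideanSpace.single i 1)
          + (if i = k then (1:ℝ) else 0) * D (EuclideanSpace.single j 1)
          - (if i = j then (1:ℝ) else 0) * D (EuclideanSpace.single k 1)))
        * fderiv ℝ (fun y => ‖y‖ ^ 2) x₀ (EuclideanSpace.single k 1))
      = a ^ 2 * (Di i * x₀ j + Di j * x₀ i - (if i = j then (1:ℝ) else 0) * S) := by
    intro i j
    have : ∀ k : Fin n, ((1 / 2) * a ^ 2 *
        ((if j = k then (1:ℝ) else 0) * Di i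
          + (if i = k then (1:ℝ) else 0) * Di j
          - (if i = j then (1:ℝ) else 0) * Di k)) * (2 * x₀ k)
      = a ^ 2 * ((if j = k then (1:ℝ) else 0) * (Di i * x₀ k))
        + a ^ 2 * ((if i = k then (1:ℝ) else 0) * (Di j * x₀ k))
        - a ^ 2 * ((if i = j then (1:ℝ) else 0) * (Di k * x₀ k)) := by
      intro k; ring
    calc (∑ k, ((1 / 2) * a ^ 2 *
        ((if j = k then (1:ℝ) else 0) * D (EuclideanSpace.single i 1)
          + (if i = k then (1:ℝ) else 0) * D (EuclideanSpace.single j 1)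
          - (if i = j then (1:ℝ) else 0) * D (EuclideanSpace.single k 1)))
        * fderiv ℝ (fun y => ‖y‖ ^ 2) x₀ (EuclideanSpace.single k 1))
        = ∑ k, (a ^ 2 * ((if j = k then (1:ℝ) else 0) * (Di i * x₀ k))
            + a ^ 2 * ((if i = k then (1:ℝ) else 0) * (Di j * x₀ k))
            - a ^ 2 * ((if i = j then (1:ℝ) else 0) * (Di k * x₀ k))) := by
          refine Finset.sum_congr rfl fun k _ => ?_
          rw [normSq_fderiv_single x₀ k]
          exact this k
      _ = a ^ 2 * (Di i * x₀ j + Di j * x₀ i - (if i = j then (1:ℝ) else 0) * S) := by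
          rw [Finset.sum_sub_distrib, Finset.sum_add_distrib]
          simp only [← Finset.mul_sum]
          simp only [ite_mul, one_mul, zero_mul, Finset.sum_ite_eq, Finset.mem_univ, if_true]
          rw [← hS_def]
          ring
  show 0 < ∑ i, ∑ j,
    (fderiv ℝ (fun y => fderiv ℝ (fun z : EuclideanSpace ℝ (Fin n) => ‖z‖ ^ 2) y
        (EuclideanSpace.single j 1)) x₀ (EuclideanSpace.single i 1)
      - ∑ k, ((1 / 2) * a ^ 2 *
          ((if j = k then (1:ℝ) else 0) * D (EuclideanSpace.single i 1)
            + (if i = k then (1:ℝ) else 0) * D (EuclideanSpace.single j 1)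
            - (if i = j then (1:ℝ) else 0) * D (EuclideanSpace.single k 1)))
        * fderiv ℝ (fun y : EuclideanSpace ℝ (Fin n) => ‖y‖ ^ 2) x₀ (EuclideanSpace.single k 1))
      * ξ i * ξ j
  have main : (∑ i, ∑ j,
      (fderiv ℝ (fun y => fderiv ℝ (fun z : EuclideanSpace ℝ (Fin n) => ‖z‖ ^ 2) y
          (EuclideanSpace.single j 1)) x₀ (EuclideanSpace.single i 1)
        - ∑ k, ((1 / 2) * a ^ 2 *
            ((if j = k then (1:ℝ) else 0) * D (EuclideanSpace.single i 1)
              + (if i = k then (1:ℝ) else 0) * D (EuclideanSpace.single j 1)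
              - (if i = j then (1:ℝ) else 0) * D (EuclideanSpace.single k 1)))
          * fderiv ℝ (fun y : EuclideanSpace ℝ (Fin n) => ‖y‖ ^ 2) x₀ (EuclideanSpace.single k 1))
        * ξ i * ξ j)
      = (2 + a ^ 2 * S) * ∑ i, ξ i * ξ i := by
    have inner1 : ∀ i : Fin n, (∑ j,
        (fderiv ℝ (fun y => fderiv ℝ (fun z : EuclideanSpace ℝ (Fin n) => ‖z‖ ^ 2) y
            (EuclideanSpace.single j 1)) x₀ (EuclideanSpace.single i 1)
          - ∑ k, ((1 / 2) * a ^ 2 *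
              ((if j = k then (1:ℝ) else 0) * D (EuclideanSpace.single i 1)
                + (if i = k then (1:ℝ) else 0) * D (EuclideanSpace.single j 1)
                - (if i = j then (1:ℝ) else 0) * D (EuclideanSpace.single k 1)))
            * fderiv ℝ (fun y : EuclideanSpace ℝ (Fin n) => ‖y‖ ^ 2) x₀ (EuclideanSpace.single k 1))
          * ξ i * ξ j)
        = (2 + a ^ 2 * S) * (ξ i * ξ i) - a ^ 2 * ((x₀ i * ξ i) * Q) := by
      intro i
      have e0 : ∀ j : Fin n,
          (fderiv ℝ (fun y => fderiv ℝ (fun z : EuclideanSpace ℝ (Fin n) => ‖z‖ ^ 2) y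
              (EuclideanSpace.single j 1)) x₀ (EuclideanSpace.single i 1)
            - ∑ k, ((1 / 2) * a ^ 2 *
                ((if j = k then (1:ℝ) else 0) * D (EuclideanSpace.single i 1)
                  + (if i = k then (1:ℝ) else 0) * D (EuclideanSpace.single j 1)
                  - (if i = j then (1:ℝ) else 0) * D (EuclideanSpace.single k 1)))
              * fderiv ℝ (fun y : EuclideanSpace ℝ (Fin n) => ‖y‖ ^ 2) x₀
                (EuclideanSpace.single k 1))
            * ξ i * ξ j
          = (if i = j then ((2:ℝ) + a ^ 2 * S) else 0) * (ξ i * ξ j)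
            - (a ^ 2 * (Di i * ξ i)) * (x₀ j * ξ j)
            - (a ^ 2 * (x₀ i * ξ i)) * (Di j * ξ j) := by
        intro j
        rw [normSq_fderiv2_single, hk i j]
        by_cases h : i = j <;> simp [h, hDi_def] <;> ring
      rw [Finset.sum_congr rfl fun j _ => e0 j]
      rw [Finset.sum_sub_distrib, Finset.sum_sub_distrib]
      have e1 : (∑ j, (if i = j then ((2:ℝ) + a ^ 2 * S) else 0) * (ξ i * ξ j))
          = (2 + a ^ 2 * S) * (ξ i * ξ i) := by
        simp [ite_mul, Finset.sum_ite_eq]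
      have e2 : (∑ j, (a ^ 2 * (Di i * ξ i)) * (x₀ j * ξ j)) = 0 := by
        rw [← Finset.mul_sum, hperp', mul_zero]
      have e3 : (∑ j, (a ^ 2 * (x₀ i * ξ i)) * (Di j * ξ j))
          = a ^ 2 * ((x₀ i * ξ i) * Q) := by
        rw [← Finset.mul_sum, ← hQ_def]
        ring
      rw [e1, e2, e3]
      ring
    rw [Finset.sum_congr rfl fun i _ => inner1 i]
    rw [Finset.sum_sub_distrib, ← Finset.mul_sum]
    have e4 : (∑ i, a ^ 2 * ((x₀ i * ξ i) * Q)) = 0 := by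
      have : ∀ i : Fin n, a ^ 2 * ((x₀ i * ξ i) * Q) = (a ^ 2 * Q) * (x₀ i * ξ i) := by
        intro i; ring
      rw [Finset.sum_congr rfl fun i _ => this i, ← Finset.mul_sum, hperp', mul_zero]
    rw [e4, sub_zero]
  rw [main]
  have hC : 0 < 2 + a ^ 2 * S := by nlinarith [sq_nonneg a]
  exact mul_pos hC hP
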